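/- arXiv:1405.5278 — 9 statements merged into one kernel-verified Lean document; each statement's English description precedes it below -/
import Mathlib

section
/- Let p be an odd prime and m, k positive integers, and let v2 denote the 2-adic valuation. Then gcd(p^k+1, p^m−1) = p^{gcd(k,m)}+1 if v2(m) > v2(k), and gcd(p^k+1, p^m−1) = 2 otherwise. -/
/-!
Write `d = gcd k m`. Since `p^k + 1 ∣ p^(2k) - 1`, the gcd equals `gcd(p^k + 1, p^e - 1)` with
`e = gcd(2k, m) = d · gcd(2, m/d)`, and `m/d` is even exactly when `v2 k < v2 m`. Put `x = p^d`
and `c = k/d`. If `v2 k < v2 m`, then `e = 2d` and `c` is odd, so `x^c ≡ x [MOD x^2 - 1]` and the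
gcd is `gcd(x + 1, x^2 - 1) = x + 1`. Otherwise `e = d`, `x^c ≡ 1 [MOD x - 1]`, and the gcd is
`gcd(2, x - 1) = 2` because `x` is odd.
-/

namespace Nat

theorem pow_add_one_dvd_pow_two_mul_sub_one (a k : ℕ) : a ^ k + 1 ∣ a ^ (2 * k) - 1 := by
  rw [mul_comm, pow_mul, ← one_pow 2, Nat.sq_sub_sq, one_pow]
  exact Dvd.intro _ rfl

theorem gcd_pow_add_one_pow_sub_one_eq (a k m : ℕ) :
    gcd (a ^ k + 1) (a ^ m - 1) = gcd (a ^ k + 1) (a ^ gcd (2 * k) m - 1) := by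
  rw [← pow_sub_one_gcd_pow_sub_one, ← gcd_assoc,
    gcd_eq_left (pow_add_one_dvd_pow_two_mul_sub_one a k)]

theorem gcd_pow_add_one_sq_sub_one {c : ℕ} (hc : Odd c) (x : ℕ) :
    gcd (x ^ c + 1) (x ^ 2 - 1) = x + 1 := by
  have hmod : x ^ c ≡ x [MOD x ^ 2 - 1] := by
    obtain ⟨e, rfl⟩ := hc
    refine ((modEq_iff_dvd' (le_self_pow (by omega) x)).2 ?_).symm
    rw [show x ^ (2 * e + 1) = (x ^ 2) ^ e * x by ring, ← Nat.sub_one_mul]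
    exact dvd_mul_of_dvd_left (by simpa using Nat.sub_dvd_pow_sub_pow (x ^ 2) 1 e) x
  rw [(hmod.add_right 1).gcd_eq,
    gcd_eq_left (by simpa using pow_add_one_dvd_pow_two_mul_sub_one x 1)]

theorem gcd_pow_add_one_sub_one {x : ℕ} (hx : 0 < x) (c : ℕ) :
    gcd (x ^ c + 1) (x - 1) = gcd 2 (x - 1) := by
  have hmod : x ^ c ≡ 1 [MOD x - 1] := by simpa using (modEq_sub hx).pow c
  exact (hmod.add_right 1).gcd_eq

theorem gcd_two_mul_left (k m : ℕ) : gcd (2 * k) m = gcd k m * gcd 2 (m / gcd k m) := by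
  rcases (gcd k m).eq_zero_or_pos with h | h
  · obtain ⟨rfl, rfl⟩ := gcd_eq_zero_iff.1 h
    rfl
  obtain ⟨d, k', m', hd, hcop, rfl, rfl⟩ := exists_coprime' h
  rw [gcd_mul_right, hcop.gcd_eq_one, one_mul, Nat.mul_div_cancel _ hd, ← mul_assoc,
    gcd_mul_right, hcop.gcd_mul_right_cancel, mul_comm]

theorem Coprime.odd_of_even {a b : ℕ} (h : Coprime a b) (hb : Even b) : Odd a := by
  rw [← not_even_iff_odd]
  intro ha
  have := dvd_gcd ha.two_dvd hb.two_dvd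
  rw [h] at this
  omega

theorem padicValNat_two_lt_iff_even_div_gcd {k m : ℕ} (hk : k ≠ 0) (hm : m ≠ 0) :
    padicValNat 2 k < padicValNat 2 m ↔ Even (m / gcd k m) := by
  obtain ⟨d, k', m', hd, hcop, rfl, rfl⟩ :=
    exists_coprime' (gcd_pos_of_pos_left m (pos_of_ne_zero hk))
  have hm' := left_ne_zero_of_mul hm
  rw [gcd_mul_right, hcop.gcd_eq_one, one_mul, Nat.mul_div_cancel _ hd,
    padicValNat.mul (left_ne_zero_of_mul hk) hd.ne', padicValNat.mul hm' hd.ne',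
    add_lt_add_iff_right, even_iff_two_dvd]
  constructor
  · intro h
    exact dvd_of_one_le_padicValNat (by omega)
  · intro h
    rw [padicValNat.eq_zero_of_not_dvd (hcop.odd_of_even (even_iff_two_dvd.2 h)).not_two_dvd_nat]
    exact one_le_padicValNat_of_dvd hm' h

end Nat

theorem gcd_pow_add_one_pow_sub_one_general (p m k : ℕ) (hodd : Odd p)
    (hm : 0 < m) (hk : 0 < k) :
    (padicValNat 2 k < padicValNat 2 m →
      Nat.gcd (p ^ k + 1) (p ^ m - 1) = p ^ Nat.gcd k m + 1) ∧
    (padicValNat 2 m ≤ padicValNat 2 k →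
      Nat.gcd (p ^ k + 1) (p ^ m - 1) = 2) := by
  have hparity := Nat.padicValNat_two_lt_iff_even_div_gcd hk.ne' hm.ne'
  have hpow : p ^ k = (p ^ Nat.gcd k m) ^ (k / Nat.gcd k m) := by
    rw [← pow_mul, Nat.mul_div_cancel' (Nat.gcd_dvd_left k m)]
  rw [Nat.gcd_pow_add_one_pow_sub_one_eq, Nat.gcd_two_mul_left, hpow]
  constructor
  · intro hv
    have heven := hparity.1 hv
    have hcop := Nat.coprime_div_gcd_div_gcd (Nat.gcd_pos_of_pos_left m hk)
    rw [Nat.gcd_eq_left heven.two_dvd, pow_mul,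
      Nat.gcd_pow_add_one_sq_sub_one (hcop.odd_of_even heven)]
  · intro hv
    have hodd_div : Odd (m / Nat.gcd k m) := Nat.not_even_iff_odd.1 (mt hparity.2 (by omega))
    rw [Nat.coprime_two_left.2 hodd_div, mul_one, Nat.gcd_pow_add_one_sub_one (pow_pos hodd.pos _),
      Nat.gcd_eq_left (Nat.Odd.sub_odd hodd.pow odd_one).two_dvd]

theorem gcd_pow_add_one_pow_sub_one (p m k : ℕ) (hp : p.Prime) (hodd : Odd p)
    (hm : 0 < m) (hk : 0 < k) :
    (padicValNat 2 k < padicValNat 2 m →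
      Nat.gcd (p ^ k + 1) (p ^ m - 1) = p ^ Nat.gcd k m + 1) ∧
    (padicValNat 2 m ≤ padicValNat 2 k →
      Nat.gcd (p ^ k + 1) (p ^ m - 1) = 2) :=
  gcd_pow_add_one_pow_sub_one_general p m k hodd hm hk
end

section
/- For every integer t ≥ 1 and all a, b ∈ F_{p^m}, the Hamming weight of the codeword c_t(a,b) satisfies wt(c_t(a,b)) = p^m − p^{m−1} − (1/(2p)) · Σ_{u∈F_p^*} Σ_{x∈F_{p^m}} ( ζ_p^{u·Tr((a+b) x^{2t})} + ζ_p^{u·Tr((a−b) π^{t} x^{2t})} ), where the right-hand side is an equality of complex numbers (the weight being cast to ℂ). -/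
open Finset

/-! Orthogonality of the additive characters `y ↦ ζ ^ (u * y)` of `𝔽_p` writes `p · wt` as
`(p - 1) (q - 1)` minus the character sums over the coordinates, `q = p ^ m`. As `q` is odd, the
coordinate `a π^{ti} + b (-π^t)^i` is `(a + b) π^{2tj}` for `i = 2j` and `(a - b) π^t π^{2tj}` for
`i = 2j + 1`. When `x = π^k` runs over `𝔽_q^*`, `x^{2t}` takes each value `π^{2tj}`,
`j < (q - 1) / 2`, exactly twice, since `π^{2tk}` has period `(q - 1) / 2` in `k`; so the sum over
the coordinates is half the two sums over `x ∈ 𝔽_q`, corrected by the term `x = 0`. -/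

theorem Finset.sum_range_two_mul {M : Type*} [AddCommMonoid M] (f : ℕ → M) (n : ℕ) :
    ∑ i ∈ range (2 * n), f i = ∑ j ∈ range n, (f (2 * j) + f (2 * j + 1)) := by
  induction n with
  | zero => simp
  | succ n ih =>
    rw [show 2 * (n + 1) = 2 * n + 1 + 1 by ring, sum_range_succ, sum_range_succ, ih,
      sum_range_succ, add_assoc]

theorem Function.Periodic.sum_range_mul {M : Type*} [AddCommMonoid M] {f : ℕ → M} {c : ℕ}
    (hf : Function.Periodic f c) (n : ℕ) :
    ∑ i ∈ range (n * c), f i = n • ∑ i ∈ range c, f i := by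
  induction n with
  | zero => simp
  | succ n ih =>
    rw [add_one_mul, sum_range_add, ih, succ_nsmul]
    exact congrArg _ (sum_congr rfl fun x _ => by
      rw [add_comm]; exact_mod_cast hf.nat_mul n x)

theorem Fintype.add_sum_units {G₀ M : Type*} [GroupWithZero G₀] [Fintype G₀] [DecidableEq G₀]
    [AddCommMonoid M] (f : G₀ → M) :
    f 0 + ∑ u : G₀ˣ, f u = ∑ x, f x := by
  rw [← add_sum_erase univ f (mem_univ 0),
    sum_subtype (univ.erase 0) (p := (· ≠ 0)) (by simp) f]
  congr 1
  exact Fintype.sum_equiv unitsEquivNeZero _ _ fun _ => rfl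

theorem IsPrimitiveRoot.sum_pow_val_mul {R : Type*} [CommRing R] [IsDomain R] {p : ℕ} [NeZero p]
    {ζ : R} (hζ : IsPrimitiveRoot ζ p) (y : ZMod p) :
    ∑ u : ZMod p, ζ ^ (u * y).val = if y = 0 then (p : R) else 0 := by
  simpa [ZMod.card, AddChar.zmodChar_apply] using
    AddChar.sum_mulShift y (AddChar.zmodChar_primitive_of_primitive_root p hζ)

section FiniteField

variable {F M : Type*} [Field F] [Fintype F] [AddCommMonoid M] {π : F}

theorem pow_injOn_range_card_sub_one (hπ : orderOf π = Fintype.card F - 1) :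
    Set.InjOn (π ^ ·) (range (Fintype.card F - 1)) := by
  rw [coe_range, ← hπ]
  exact pow_injOn_Iio_orderOf

theorem image_pow_range_eq_univ_erase_zero [DecidableEq F]
    (hπ : orderOf π = Fintype.card F - 1) :
    (range (Fintype.card F - 1)).image (π ^ ·) = univ.erase 0 := by
  have hπ0 : π ≠ 0 :=
    (orderOf_pos_iff.1 (hπ ▸ Nat.sub_pos_of_lt Fintype.one_lt_card)).isUnit.ne_zero
  refine eq_of_subset_of_card_le (fun x hx => ?_) ?_
  · obtain ⟨k, -, rfl⟩ := mem_image.1 hx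
    exact mem_erase.2 ⟨pow_ne_zero k hπ0, mem_univ _⟩
  · rw [card_image_of_injOn (pow_injOn_range_card_sub_one hπ), card_erase_of_mem (mem_univ _),
      card_univ, card_range]

theorem sum_eq_add_sum_range_pow (hπ : orderOf π = Fintype.card F - 1) (g : F → M) :
    ∑ x, g x = g 0 + ∑ k ∈ range (Fintype.card F - 1), g (π ^ k) := by
  classical
  rw [← add_sum_erase univ g (mem_univ 0), ← image_pow_range_eq_univ_erase_zero hπ,
    sum_image (pow_injOn_range_card_sub_one hπ)]

theorem sum_mul_pow_two_mul_eq {n t : ℕ} (hπ : orderOf π = Fintype.card F - 1)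
    (hn : Fintype.card F - 1 = 2 * n) (ht : 1 ≤ t) (g : F → M) (c : F) :
    ∑ x, g (c * x ^ (2 * t)) = g 0 + 2 • ∑ j ∈ range n, g (c * (π ^ j) ^ (2 * t)) := by
  have hπn : π ^ (2 * n) = 1 := hn ▸ hπ ▸ pow_orderOf_eq_one π
  have hperiodic : Function.Periodic (fun k => g (c * (π ^ k) ^ (2 * t))) n := fun k => by
    dsimp only
    rw [show (π ^ (k + n)) ^ (2 * t) = (π ^ k) ^ (2 * t) * (π ^ (2 * n)) ^ t by ring, hπn,
      one_pow, mul_one]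
  rw [sum_eq_add_sum_range_pow hπ, hn, ← hperiodic.sum_range_mul, zero_pow (by omega), mul_zero,
    mul_comm]

theorem sum_codeword_eq {t : ℕ} (hodd : Odd (Fintype.card F))
    (hπ : orderOf π = Fintype.card F - 1) (ht : 1 ≤ t) (g : F → M) (a b : F) :
    2 • (g 0 + ∑ i ∈ range (Fintype.card F - 1), g (a * π ^ (t * i) + b * (-(π ^ t)) ^ i)) =
      ∑ x, g ((a + b) * x ^ (2 * t)) + ∑ x, g ((a - b) * π ^ t * x ^ (2 * t)) := by
  obtain ⟨n, hn⟩ : ∃ n, Fintype.card F - 1 = 2 * n := by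
    obtain ⟨k, hk⟩ := hodd
    exact ⟨k, by omega⟩
  have heven (j : ℕ) :
      a * π ^ (t * (2 * j)) + b * (-(π ^ t)) ^ (2 * j) = (a + b) * (π ^ j) ^ (2 * t) := by
    rw [(even_two_mul j).neg_pow]
    ring
  have hodd (j : ℕ) : a * π ^ (t * (2 * j + 1)) + b * (-(π ^ t)) ^ (2 * j + 1) =
      (a - b) * π ^ t * (π ^ j) ^ (2 * t) := by
    rw [(odd_two_mul_add_one j).neg_pow]
    ring
  rw [sum_mul_pow_two_mul_eq hπ hn ht, sum_mul_pow_two_mul_eq hπ hn ht, hn, sum_range_two_mul]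
  simp only [heven, hodd, sum_add_distrib]
  abel

end FiniteField

theorem card_filter_ne_zero_eq {R : Type*} [CommRing R] [IsDomain R] {p : ℕ} [Fact p.Prime]
    {ζ : R} (hζ : IsPrimitiveRoot ζ p) {ι : Type*} (s : Finset ι) (f : ι → ZMod p) :
    (p : R) * #{i ∈ s | f i ≠ 0} =
      #s * (p - 1) - ∑ u : (ZMod p)ˣ, ∑ i ∈ s, ζ ^ (u * f i : ZMod p).val := by
  have hunits (y : ZMod p) :
      ∑ u : (ZMod p)ˣ, ζ ^ (u * y : ZMod p).val = if y = 0 then (p : R) - 1 else -1 := by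
    have := Fintype.add_sum_units fun x : ZMod p => ζ ^ (x * y).val
    rw [hζ.sum_pow_val_mul, zero_mul, ZMod.val_zero, pow_zero] at this
    split_ifs at this ⊢ <;> linear_combination this
  calc (p : R) * #{i ∈ s | f i ≠ 0}
      = ∑ i ∈ s, ((p : R) * if f i ≠ 0 then 1 else 0) := by
        simp only [card_filter, Nat.cast_sum, Nat.cast_ite, Nat.cast_one, Nat.cast_zero, mul_sum]
    _ = ∑ i ∈ s, ((p - 1) - ∑ u : (ZMod p)ˣ, ζ ^ (u * f i : ZMod p).val) :=
        sum_congr rfl fun i _ => by rw [hunits]; by_cases h : f i = 0 <;> simp [h]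
    _ = _ := by rw [sum_sub_distrib, sum_const, sum_comm, nsmul_eq_mul]

theorem weight_formula (p m : ℕ) [Fact p.Prime] (hodd : Odd p) (hm : 0 < m)
    (F : Type) [Field F] [Fintype F] [Algebra (ZMod p) F]
    (hcard : Fintype.card F = p ^ m)
    (π : F) (hπ : orderOf π = p ^ m - 1)
    (ζ : ℂ) (hζ : IsPrimitiveRoot ζ p)
    (t : ℕ) (ht : 1 ≤ t) (a b : F) :
    ((Finset.univ.filter (fun i : Fin (p ^ m - 1) =>
        Algebra.trace (ZMod p) F (a * π ^ (t * (i : ℕ)) + b * (-(π ^ t)) ^ (i : ℕ)) ≠ 0)).card : ℂ)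
      = (p : ℂ) ^ m - (p : ℂ) ^ (m - 1) -
        (1 / (2 * (p : ℂ))) *
          ∑ u : (ZMod p)ˣ, ∑ x : F,
            (ζ ^ (((u : ZMod p) * Algebra.trace (ZMod p) F ((a + b) * x ^ (2 * t))).val)
             + ζ ^ (((u : ZMod p) * Algebra.trace (ZMod p) F ((a - b) * π ^ t * x ^ (2 * t))).val)) := by
  set Tr := Algebra.trace (ZMod p) F
  have hcodeword (u : (ZMod p)ˣ) :
      2 * (1 + ∑ i : Fin (p ^ m - 1),
          ζ ^ (u * Tr (a * π ^ (t * (i : ℕ)) + b * (-(π ^ t)) ^ (i : ℕ)) : ZMod p).val) =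
        ∑ x, (ζ ^ (u * Tr ((a + b) * x ^ (2 * t)) : ZMod p).val +
          ζ ^ (u * Tr ((a - b) * π ^ t * x ^ (2 * t)) : ZMod p).val) := by
    rw [← hcard] at hπ
    have := sum_codeword_eq (hcard ▸ hodd.pow) hπ ht (fun y => ζ ^ (u * Tr y : ZMod p).val) a b
    rw [map_zero, mul_zero, ZMod.val_zero, pow_zero, hcard, ← Fin.sum_univ_eq_sum_range] at this
    rw [sum_add_distrib, ← this, two_nsmul, two_mul]
  have hweight := card_filter_ne_zero_eq hζ univ
    fun i : Fin (p ^ m - 1) => Tr (a * π ^ (t * (i : ℕ)) + b * (-(π ^ t)) ^ (i : ℕ))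
  simp only [← hcodeword, card_univ, Fintype.card_fin] at hweight ⊢
  rw [← mul_sum, sum_add_distrib, sum_const, card_univ, ZMod.card_units]
  have hp : p.Prime := Fact.out
  have hp0 : (p : ℂ) ≠ 0 := Nat.cast_ne_zero.2 hp.ne_zero
  have hpm : (p : ℂ) ^ m = p * p ^ (m - 1) := by rw [← pow_succ', Nat.sub_add_cancel hm]
  rw [Nat.cast_sub (Nat.one_le_pow _ _ hp.pos)] at hweight
  rw [nsmul_one, Nat.cast_sub hp.one_le]
  field_simp
  push_cast at hweight ⊢
  linear_combination hweight - hpm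
end

section
/- Let t, e ∈ {1, …, p^m−2} be positive integers such that t ≡ e·p^τ (mod (p^m−1)/2) for some τ ∈ {0,1,…,m−1}. Then the cyclic codes C_t and C_e have the same weight distribution: for every natural number w, the number of pairs (a,b) ∈ F_{p^m}^2 with wt(c_t(a,b)) = w equals the number of pairs (a,b) ∈ F_{p^m}^2 with wt(c_e(a,b)) = w. -/
/-!
Put `d = (p ^ m - 1) / 2`. Since `π` has order `2 d`, `π ^ d = -1`, so the congruence
`t ≡ e p ^ τ (mod d)` gives `π ^ t = ± (π ^ e) ^ (p ^ τ)`. The weight distribution of the code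
generated by `β` and `-β` is unchanged when `β` is replaced by `-β` (swap `a` and `b`) or by
`φ β` for a field automorphism `φ` fixing the trace (apply `φ` to `a` and `b`); the `τ`-th power
of Frobenius is such an automorphism and sends `π ^ e` to `(π ^ e) ^ (p ^ τ)`.
-/

open Finset

section WeightDistribution

variable (K : Type*) {F : Type*} [Field K] [DecidableEq K] [Field F] [Fintype F] [Algebra K F]

/-- The code `C_t` of the statement is the case `β = π ^ t`, `n = p ^ m - 1`. -/
noncomputable def weightDistribution (n : ℕ) (β : F) (w : ℕ) : ℕ :=
  #{ab : F × F |
    #{i : Fin n | Algebra.trace K F (ab.1 * β ^ (i : ℕ) + ab.2 * (-β) ^ (i : ℕ)) ≠ 0} = w}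

theorem weightDistribution_neg (n : ℕ) (β : F) :
    weightDistribution K n (-β) = weightDistribution K n β := by
  funext w
  refine card_equiv (Equiv.prodComm F F) fun ab => ?_
  simp only [mem_filter, mem_univ, true_and, Equiv.prodComm_apply, Prod.fst_swap, Prod.snd_swap,
    neg_neg, add_comm]

theorem weightDistribution_algEquiv (φ : F ≃ₐ[K] F) (n : ℕ) (β : F) :
    weightDistribution K n (φ β) = weightDistribution K n β := by
  funext w
  refine (card_equiv (φ.toEquiv.prodCongr φ.toEquiv) fun ab => ?_).symm
  simp only [mem_filter, mem_univ, true_and, Equiv.prodCongr_apply, Prod.map_fst, Prod.map_snd,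
    AlgEquiv.toEquiv_eq_coe, EquivLike.coe_coe, ← map_neg, ← map_pow, ← map_mul, ← map_add,
    Algebra.trace_eq_of_algEquiv]

end WeightDistribution

section Field

variable {F : Type*} [Field F]

theorem pow_eq_neg_one_of_orderOf_eq_two_mul {π : F} {d : ℕ} (hd : 0 < d)
    (h : orderOf π = 2 * d) : π ^ d = -1 := by
  have hsq : (π ^ d) ^ 2 = 1 := by rw [← pow_mul, mul_comm, ← h, pow_orderOf_eq_one]
  exact (sq_eq_one_iff.mp hsq).resolve_left (pow_ne_one_of_lt_orderOf hd.ne' (by omega))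

theorem pow_eq_or_eq_neg_of_modEq {π : F} {d s r : ℕ} (hπ : π ^ d = -1) (h : s ≡ r [MOD d]) :
    π ^ s = π ^ r ∨ π ^ s = -π ^ r := by
  have hdecomp : ∀ k, π ^ k = (-1) ^ (k / d) * π ^ (k % d) := fun k => by
    rw [← hπ, ← pow_mul, ← pow_add, Nat.div_add_mod]
  rw [hdecomp s, hdecomp r, h]
  rcases neg_one_pow_eq_or F (s / d) with hs | hs <;>
    rcases neg_one_pow_eq_or F (r / d) with hr | hr <;> simp [hs, hr]

end Field

theorem FiniteField.frobeniusAlgEquivOfAlgebraic_pow_apply (K : Type*) {L : Type*} [Field K]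
    [Fintype K] [Field L] [Algebra K L] [Algebra.IsAlgebraic K L] (n : ℕ) (x : L) :
    (frobeniusAlgEquivOfAlgebraic K L ^ n) x = x ^ Fintype.card K ^ n := by
  rw [AlgEquiv.coe_pow, coe_frobeniusAlgEquivOfAlgebraic_iterate]

theorem same_weight_distribution_general (p m : ℕ) [Fact p.Prime] (hodd : Odd p) (hm : 0 < m)
    (F : Type) [Field F] [Fintype F] [Algebra (ZMod p) F]
    (π : F) (hπ : orderOf π = p ^ m - 1) (t e : ℕ)
    (τ : ℕ) (hcong : t ≡ e * p ^ τ [MOD (p ^ m - 1) / 2]) :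
    ∀ w : ℕ,
      (Finset.univ.filter (fun ab : F × F =>
        (Finset.univ.filter (fun i : Fin (p ^ m - 1) =>
          Algebra.trace (ZMod p) F
            (ab.1 * π ^ (t * (i : ℕ)) + ab.2 * (-(π ^ t)) ^ (i : ℕ)) ≠ 0)).card = w)).card
      =
      (Finset.univ.filter (fun ab : F × F =>
        (Finset.univ.filter (fun i : Fin (p ^ m - 1) =>
          Algebra.trace (ZMod p) F
            (ab.1 * π ^ (e * (i : ℕ)) + ab.2 * (-(π ^ e)) ^ (i : ℕ)) ≠ 0)).card = w)).card := by
  intro w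
  have hpm_odd : Odd (p ^ m) := hodd.pow
  have hhalf : orderOf π = 2 * ((p ^ m - 1) / 2) := by
    rw [hπ, Nat.two_mul_div_two_of_even (Nat.Odd.sub_odd hpm_odd odd_one)]
  have hpos : 0 < (p ^ m - 1) / 2 := by
    obtain ⟨k, hk⟩ := hpm_odd
    have := Nat.one_lt_pow hm.ne' (Fact.out : p.Prime).one_lt
    omega
  have hsign := pow_eq_or_eq_neg_of_modEq (pow_eq_neg_one_of_orderOf_eq_two_mul hpos hhalf) hcong
  rw [pow_mul, ← ZMod.card p, ← FiniteField.frobeniusAlgEquivOfAlgebraic_pow_apply] at hsign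
  suffices weightDistribution (ZMod p) (p ^ m - 1) (π ^ t) w =
      weightDistribution (ZMod p) (p ^ m - 1) (π ^ e) w by
    simpa only [weightDistribution, pow_mul] using this
  rcases hsign with h | h <;>
    simp only [h, weightDistribution_neg, weightDistribution_algEquiv]

theorem same_weight_distribution (p m : ℕ) [Fact p.Prime] (hodd : Odd p) (hm : 0 < m)
    (F : Type) [Field F] [Fintype F] [DecidableEq F] [Algebra (ZMod p) F]
    (hcard : Fintype.card F = p ^ m)
    (π : F) (hπ : orderOf π = p ^ m - 1)
    (t e : ℕ) (ht1 : 1 ≤ t) (ht2 : t ≤ p ^ m - 2) (he1 : 1 ≤ e) (he2 : e ≤ p ^ m - 2)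
    (τ : ℕ) (hτ : τ < m) (hcong : t ≡ e * p ^ τ [MOD (p ^ m - 1) / 2]) :
    ∀ w : ℕ,
      (Finset.univ.filter (fun ab : F × F =>
        (Finset.univ.filter (fun i : Fin (p ^ m - 1) =>
          Algebra.trace (ZMod p) F
            (ab.1 * π ^ (t * (i : ℕ)) + ab.2 * (-(π ^ t)) ^ (i : ℕ)) ≠ 0)).card = w)).card
      =
      (Finset.univ.filter (fun ab : F × F =>
        (Finset.univ.filter (fun i : Fin (p ^ m - 1) =>
          Algebra.trace (ZMod p) F
            (ab.1 * π ^ (e * (i : ℕ)) + ab.2 * (-(π ^ e)) ^ (i : ℕ)) ≠ 0)).card = w)).card :=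
  same_weight_distribution_general p m hodd hm F π hπ t e τ hcong
end

section
/- Suppose π^{((p^k+1)/2)·p^i} ≠ −π^{(p^k+1)/2} for all i ∈ {0,1,…,m−1}. Then the minimal polynomial of π^{−(p^k+1)/2} over F_p has degree m, and the minimal polynomial of −π^{−(p^k+1)/2} over F_p also has degree m. -/
/-!
The degree `d` of the minimal polynomial of `α` over `𝔽_p` divides `m` and satisfies
`α ^ p ^ d = α`. For `α = π^{-e}` with `e = (p^k + 1)/2`, this equation with a proper divisor
`d` of `m` means `p^m - 1 ∣ e (p^d - 1)`, so `M = 2 (p^m - 1)/(p^d - 1)` divides both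
`p^k + 1` and `p^m - 1` while `M ≥ 2 p^{m/2}`. Modulo `M` we then have `p^{gcd(2k, m)} ≡ 1`,
so `M < p^{gcd(2k, m)}` forces `gcd(2k, m) = m`; but then `p^{m/2} ≡ p^k ≡ -1`, contradicting
`M > p^{m/2} + 1`.
Since `p^d` is odd, `-α` is fixed by `x ↦ x ^ p ^ d` exactly when `α` is.
-/

open Module IntermediateField

theorem Nat.le_div_two_of_dvd_of_lt {d m : ℕ} (hdvd : d ∣ m) (hlt : d < m) : d ≤ m / 2 := by
  obtain ⟨c, rfl⟩ := hdvd
  rcases c with _ | _ | c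
  · simp at hlt
  · simp at hlt
  · rw [Nat.le_div_iff_mul_le two_pos]; nlinarith

theorem pow_eq_pow_div_two_of_dvd_two_mul {G : Type*} [Monoid G] {x : G} {m k : ℕ}
    (hx : x ^ m = 1) (h2k : m ∣ 2 * k) (hk : ¬ m ∣ k) : x ^ k = x ^ (m / 2) := by
  have hm : m ≠ 0 := by rintro rfl; simp_all
  have hr : 2 * (k % m) = m := by
    refine Nat.eq_of_dvd_of_lt_two_mul ?_ ?_ ?_
    · exact fun h => hk (Nat.dvd_of_mod_eq_zero (by omega))
    · have hsplit : 2 * k = m * (2 * (k / m)) + 2 * (k % m) := by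
        have := Nat.div_add_mod k m; linarith
      exact (Nat.dvd_add_right (dvd_mul_right m _)).mp (hsplit ▸ h2k)
    · have := Nat.mod_lt k (Nat.pos_of_ne_zero hm); omega
  rw [← Nat.div_add_mod k m, pow_add, pow_mul, hx, one_pow, one_mul]
  congr 1; omega

theorem Nat.not_dvd_pow_add_one_of_dvd_pow_sub_one {p m k M : ℕ} (hp : 1 < p) (hm : 0 < m)
    (hM : M ∣ p ^ m - 1) (hlarge : p ^ (m / 2) + 1 < M) : ¬ M ∣ p ^ k + 1 := by
  intro hMk
  have : Fact (2 < M) := ⟨by have := Nat.one_le_pow (m / 2) p (by omega); omega⟩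
  have pow_eq_one_iff (n : ℕ) : (p : ZMod M) ^ n = 1 ↔ M ∣ p ^ n - 1 := by
    rw [← Nat.modEq_iff_dvd' (Nat.one_le_pow _ _ (by omega)), ← ZMod.natCast_eq_natCast_iff,
      eq_comm]
    push_cast; rfl
  have pow_eq_neg_one_iff (n : ℕ) : (p : ZMod M) ^ n = -1 ↔ M ∣ p ^ n + 1 := by
    rw [← ZMod.natCast_eq_zero_iff, eq_neg_iff_add_eq_zero]
    push_cast; rfl
  have hxm := (pow_eq_one_iff m).mpr hM
  have hxk := (pow_eq_neg_one_iff k).mpr hMk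
  have hxg : (p : ZMod M) ^ Nat.gcd (2 * k) m = 1 :=
    pow_gcd_eq_one.mpr ⟨by rw [pow_mul', hxk, neg_one_sq], hxm⟩
  by_cases hgm : Nat.gcd (2 * k) m = m
  · have h2k : m ∣ 2 * k := Nat.gcd_eq_right_iff_dvd.mp hgm
    by_cases hmk : m ∣ k
    · obtain ⟨c, rfl⟩ := hmk
      rw [pow_mul, hxm, one_pow] at hxk
      exact ZMod.neg_one_ne_one hxk.symm
    · rw [pow_eq_pow_div_two_of_dvd_two_mul hxm h2k hmk, pow_eq_neg_one_iff] at hxk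
      have := Nat.le_of_dvd (by positivity) hxk
      omega
  · have hg_pos : 0 < Nat.gcd (2 * k) m := Nat.gcd_pos_of_pos_right _ hm
    have hg_le : Nat.gcd (2 * k) m ≤ m / 2 :=
      Nat.le_div_two_of_dvd_of_lt (Nat.gcd_dvd_right _ _)
        (lt_of_le_of_ne (Nat.le_of_dvd hm (Nat.gcd_dvd_right _ _)) hgm)
    have h1 := Nat.le_of_dvd (Nat.sub_pos_of_lt (Nat.one_lt_pow hg_pos.ne' hp))
      ((pow_eq_one_iff _).mp hxg)
    have h2 := Nat.pow_le_pow_right (by omega : 0 < p) hg_le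
    omega

theorem Nat.pow_sub_le_of_pow_sub_one_eq_mul {p m d T : ℕ} (hp : 1 < p) (hd : 0 < d)
    (hdm : d ≤ m) (hT : p ^ m - 1 = (p ^ d - 1) * T) : p ^ (m - d) ≤ T := by
  have hpd : 1 < p ^ d := Nat.one_lt_pow hd.ne' hp
  have hsplit : p ^ m = p ^ d * p ^ (m - d) := by rw [← pow_add, Nat.add_sub_cancel' hdm]
  by_contra! hlt
  have := Nat.mul_le_mul_left (p ^ d) hlt
  rw [Nat.sub_one_mul, hsplit] at hT
  rw [Nat.mul_succ] at this
  omega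

theorem not_pow_sub_one_dvd_half_pow_add_one_mul {p m k d : ℕ} (hp : 1 < p) (hodd : Odd p)
    (hd : 0 < d) (hdm : d ∣ m) (hlt : d < m) :
    ¬ p ^ m - 1 ∣ (p ^ k + 1) / 2 * (p ^ d - 1) := by
  intro h
  obtain ⟨T, hT⟩ := Nat.pow_sub_one_dvd_pow_sub_one p hdm
  have hD : 0 < p ^ d - 1 := Nat.sub_pos_of_lt (Nat.one_lt_pow hd.ne' hp)
  have hTe : T ∣ (p ^ k + 1) / 2 :=
    Nat.dvd_of_mul_dvd_mul_left hD (by rwa [hT, mul_comm ((p ^ k + 1) / 2)] at h)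
  have h2T_k : 2 * T ∣ p ^ k + 1 :=
    Nat.two_mul_div_two_of_even hodd.pow.add_one ▸ mul_dvd_mul_left 2 hTe
  have h2T_m : 2 * T ∣ p ^ m - 1 :=
    hT ▸ mul_dvd_mul (even_iff_two_dvd.mp (Nat.Odd.sub_odd hodd.pow odd_one)) dvd_rfl
  have hd_half : d ≤ m / 2 := Nat.le_div_two_of_dvd_of_lt hdm hlt
  have hT_large := Nat.pow_sub_le_of_pow_sub_one_eq_mul hp hd hlt.le hT
  have h1 := Nat.pow_le_pow_right (by omega : 0 < p) (by omega : m / 2 ≤ m - d)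
  have h2 := Nat.one_lt_pow (by omega : m / 2 ≠ 0) hp
  exact Nat.not_dvd_pow_add_one_of_dvd_pow_sub_one hp (by omega) h2T_m (by omega) h2T_k

theorem IsOfFinOrder.orderOf_dvd_mul_sub_one_of_pow_pow_eq {G : Type*} [Monoid G] {x : G}
    (hx : IsOfFinOrder x) {e q : ℕ} (h : (x ^ e) ^ q = x ^ e) : orderOf x ∣ e * (q - 1) := by
  rw [← pow_mul, hx.pow_eq_pow_iff_modEq] at h
  rcases q with _ | q
  · exact dvd_zero _
  rw [Nat.mul_sub_one]
  exact (Nat.modEq_iff_dvd' (Nat.le_mul_of_pos_right e q.succ_pos)).mp h.symm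

theorem FiniteField.pow_card_pow_natDegree_minpoly {K L : Type*} [Field K] [Fintype K] [Field L]
    [Algebra K L] {α : L} (hα : IsIntegral K α) :
    α ^ Fintype.card K ^ (minpoly K α).natDegree = α := by
  have : FiniteDimensional K K⟮α⟯ := adjoin.finiteDimensional hα
  have : Finite K⟮α⟯ := Module.finite_of_finite K
  let _ : Fintype K⟮α⟯ := Fintype.ofFinite _
  have hcard : Fintype.card K⟮α⟯ = Fintype.card K ^ (minpoly K α).natDegree := by
    rw [card_eq_pow_finrank (K := K), adjoin.finrank hα]
  simpa [hcard] using
    congrArg Subtype.val (FiniteField.pow_card (⟨α, mem_adjoin_simple_self K α⟩ : K⟮α⟯))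

theorem finrank_zmod_eq_of_card_eq_pow {p m : ℕ} [Fact p.Prime] {V : Type*} [AddCommGroup V]
    [Module (ZMod p) V] [Fintype V] (hcard : Fintype.card V = p ^ m) :
    finrank (ZMod p) V = m := by
  rw [card_eq_pow_finrank (K := ZMod p), ZMod.card] at hcard
  exact Nat.pow_right_injective (Fact.out : p.Prime).two_le hcard

theorem natDegree_minpoly_zmod_eq_of_pow_ne_self {p m : ℕ} [Fact p.Prime] {F : Type*} [Field F]
    [Fintype F] [Algebra (ZMod p) F] (hcard : Fintype.card F = p ^ m) {α : F}
    (hα : ∀ d, 0 < d → d ∣ m → d < m → α ^ p ^ d ≠ α) :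
    (minpoly (ZMod p) α).natDegree = m := by
  have hint : IsIntegral (ZMod p) α := .of_finite _ _
  have hfinrank := finrank_zmod_eq_of_card_eq_pow hcard
  refine (minpoly.natDegree_le α).trans_eq hfinrank |>.eq_of_not_lt fun hlt => ?_
  refine hα _ (minpoly.natDegree_pos hint) (hfinrank ▸ minpoly.degree_dvd hint) hlt ?_
  simpa using FiniteField.pow_card_pow_natDegree_minpoly (K := ZMod p) hint

theorem minpoly_degree_eq_general (p m k : ℕ) [Fact p.Prime] (hodd : Odd p)
    (F : Type) [Field F] [Fintype F] [Algebra (ZMod p) F]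
    (hcard : Fintype.card F = p ^ m)
    (π : F) (hπ : orderOf π = p ^ m - 1) :
    (minpoly (ZMod p) (π⁻¹ ^ ((p ^ k + 1) / 2))).natDegree = m ∧
    (minpoly (ZMod p) (-(π⁻¹ ^ ((p ^ k + 1) / 2)))).natDegree = m := by
  have hp : 1 < p := (Fact.out : p.Prime).one_lt
  have hα : ∀ d, 0 < d → d ∣ m → d < m →
      (π⁻¹ ^ ((p ^ k + 1) / 2)) ^ p ^ d ≠ π⁻¹ ^ ((p ^ k + 1) / 2) := by
    intro d hd hdm hlt hfix
    have hπ_fin : IsOfFinOrder π :=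
      orderOf_pos_iff.mp (hπ ▸ Nat.sub_pos_of_lt (Nat.one_lt_pow (by omega) hp))
    rw [inv_pow, inv_pow, inv_inj] at hfix
    exact not_pow_sub_one_dvd_half_pow_add_one_mul hp hodd hd hdm hlt
      (hπ ▸ hπ_fin.orderOf_dvd_mul_sub_one_of_pow_pow_eq hfix)
  refine ⟨natDegree_minpoly_zmod_eq_of_pow_ne_self hcard hα,
    natDegree_minpoly_zmod_eq_of_pow_ne_self hcard fun d hd hdm hlt hfix => hα d hd hdm hlt ?_⟩
  rwa [hodd.pow.neg_pow, neg_inj] at hfix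

theorem minpoly_degree_eq (p m k : ℕ) [Fact p.Prime] (hodd : Odd p) (hm : 0 < m) (hk : 0 < k)
    (F : Type) [Field F] [Fintype F] [Algebra (ZMod p) F]
    (hcard : Fintype.card F = p ^ m)
    (π : F) (hπ : orderOf π = p ^ m - 1)
    (hne : ∀ i < m, π ^ (((p ^ k + 1) / 2) * p ^ i) ≠ -(π ^ ((p ^ k + 1) / 2))) :
    (minpoly (ZMod p) (π⁻¹ ^ ((p ^ k + 1) / 2))).natDegree = m ∧
    (minpoly (ZMod p) (-(π⁻¹ ^ ((p ^ k + 1) / 2)))).natDegree = m :=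
  minpoly_degree_eq_general p m k hodd F hcard π hπ
end

section
/- Assume v2(m) > v2(k) and set d = gcd(m,k) and u_p = π^{(p^m−1)/(p−1)}. Then u_p^{(p^k+1)/2} = (−1)^d · u_p in F_{p^m}. -/
/-!
With `c = (p - 1) / 2` and `S n = 1 + p + ⋯ + p ^ (n - 1)`, we have `u_p = π ^ S m`,
`(p ^ k + 1) / 2 = c * S k + 1` and `u_p ^ c = π ^ ((p ^ m - 1) / 2) = -1`, so
`u_p ^ ((p ^ k + 1) / 2) = (-1) ^ S k * u_p`. Since `p` is odd, `S k ≡ k (mod 2)`, and since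
`m` is even, `k ≡ gcd m k (mod 2)`.
-/

open Finset

theorem Nat.sub_one_mul_geom_sum (p n : ℕ) : (p - 1) * ∑ i ∈ range n, p ^ i = p ^ n - 1 := by
  rcases p with _ | p
  · cases n <;> simp
  · rw [Nat.add_sub_cancel, ← geom_sum_mul_add p n, Nat.add_sub_cancel, mul_comm]

theorem Odd.geom_sum_mod_two {p : ℕ} (hp : Odd p) (n : ℕ) :
    (∑ i ∈ range n, p ^ i) % 2 = n % 2 := by
  induction n with
  | zero => rfl
  | succ n ih => rw [sum_range_succ, Nat.add_mod, ih, Nat.odd_iff.mp hp.pow]; omega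

theorem Nat.gcd_mod_two_of_padicValNat_lt {m k : ℕ} (h : padicValNat 2 k < padicValNat 2 m) :
    Nat.gcd m k % 2 = k % 2 := by
  have hm : 2 ∣ m := dvd_of_one_le_padicValNat (by omega)
  rcases Nat.even_or_odd k with hk | hk
  · rw [Nat.even_iff.mp hk, ← Nat.dvd_iff_mod_eq_zero]
    exact Nat.dvd_gcd hm hk.two_dvd
  · rw [Nat.odd_iff.mp hk, ← Nat.odd_iff]
    exact hk.of_dvd_nat (Nat.gcd_dvd_right m k)

theorem pow_eq_neg_one_of_orderOf_eq_two_mul_s4 {R : Type*} [CommRing R] [NoZeroDivisors R] {x : R}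
    {c : ℕ} (hx : orderOf x = 2 * c) (hc : c ≠ 0) : x ^ c = -1 := by
  refine IsPrimitiveRoot.eq_neg_one_of_two_right ?_
  simpa [hx, hc] using (IsPrimitiveRoot.orderOf x).pow_of_dvd hc (hx ▸ dvd_mul_left c 2)

theorem up_pow_eq_general (p m k : ℕ) [Fact p.Prime] (hodd : Odd p)
    (F : Type) [Field F]
    (π : F) (hπ : orderOf π = p ^ m - 1)
    (hv : padicValNat 2 k < padicValNat 2 m) :
    (π ^ ((p ^ m - 1) / (p - 1))) ^ ((p ^ k + 1) / 2)
      = (-1 : F) ^ (Nat.gcd m k) * π ^ ((p ^ m - 1) / (p - 1)) := by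
  have hp : 2 ≤ p := (Fact.out : p.Prime).two_le
  have hm : m ≠ 0 := by rintro rfl; simp at hv
  obtain ⟨c, hc⟩ : 2 ∣ p - 1 := (Nat.Odd.sub_odd hodd odd_one).two_dvd
  rw [← Nat.geomSum_eq hp]
  set S := ∑ i ∈ range k, p ^ i
  set T := ∑ i ∈ range m, p ^ i
  have hord : orderOf π = 2 * (c * T) := by
    rw [hπ, ← Nat.sub_one_mul_geom_sum, hc, mul_assoc]
  have hcT : c * T ≠ 0 := by
    have := Nat.one_lt_pow hm hp
    omega
  have hhalf : π ^ (c * T) = -1 := pow_eq_neg_one_of_orderOf_eq_two_mul_s4 hord hcT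
  have hexp : (p ^ k + 1) / 2 = c * S + 1 := by
    have hS : 2 * (c * S) = p ^ k - 1 := by rw [← mul_assoc, ← hc, Nat.sub_one_mul_geom_sum]
    have := Nat.one_le_pow k p (by omega)
    omega
  calc (π ^ T) ^ ((p ^ k + 1) / 2) = (π ^ (c * T)) ^ S * π ^ T := by
        rw [hexp, pow_add, pow_one, ← pow_mul, ← pow_mul, mul_right_comm, mul_comm T]
    _ = (-1) ^ Nat.gcd m k * π ^ T := by
        rw [hhalf, neg_one_pow_eq_pow_mod_two, hodd.geom_sum_mod_two,
          ← Nat.gcd_mod_two_of_padicValNat_lt hv, ← neg_one_pow_eq_pow_mod_two]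

theorem up_pow_eq (p m k : ℕ) [Fact p.Prime] (hodd : Odd p) (hm : 0 < m) (hk : 0 < k)
    (F : Type) [Field F] [Fintype F] [Algebra (ZMod p) F]
    (hcard : Fintype.card F = p ^ m)
    (π : F) (hπ : orderOf π = p ^ m - 1)
    (hv : padicValNat 2 k < padicValNat 2 m) :
    (π ^ ((p ^ m - 1) / (p - 1))) ^ ((p ^ k + 1) / 2)
      = (-1 : F) ^ (Nat.gcd m k) * π ^ ((p ^ m - 1) / (p - 1)) :=
  up_pow_eq_general p m k hodd F π hπ hv
end

section
/- Assume v2(m) > v2(k) and set d = gcd(m,k). Then 2(p^d+1) divides p^m−1 and (π^{(p^m−1)/(2(p^d+1))})^{p^k+1} = −1 in F_{p^m}. -/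
/-!
Write `d = gcd m k` and `q = p ^ d`. Since `v₂ m > v₂ k = v₂ d`, the exponent `m / d` is even and
`k / d` is odd. For odd `q` one has `q ^ 2 ≡ 1 [MOD 2 (q + 1)]`, so `p ^ m = q ^ (m / d) ≡ 1` and
`p ^ k + 1 = q ^ (k / d) + 1 ≡ q + 1` modulo `2 (q + 1)`. The first congruence gives the divisibility;
then `π ^ ((p ^ m - 1) / (2 (q + 1)))` is a primitive `2 (q + 1)`-th root of unity, and its
`(q + 1)`-th power is `-1`.
-/

section PadicValNatGcd

variable {ℓ m k : ℕ} [Fact ℓ.Prime]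

theorem padicValNat_gcd_of_lt (hk : k ≠ 0) (hv : padicValNat ℓ k < padicValNat ℓ m) :
    padicValNat ℓ (m.gcd k) = padicValNat ℓ k := by
  have hd : m.gcd k ≠ 0 := Nat.gcd_ne_zero_right hk
  apply le_antisymm
  · exact (padicValNat_dvd_iff_le hk).mp (pow_padicValNat_dvd.trans (Nat.gcd_dvd_right m k))
  · refine (padicValNat_dvd_iff_le hd).mp (Nat.dvd_gcd ?_ pow_padicValNat_dvd)
    exact (pow_dvd_pow ℓ hv.le).trans pow_padicValNat_dvd

theorem dvd_div_gcd_of_padicValNat_lt (hk : k ≠ 0) (hv : padicValNat ℓ k < padicValNat ℓ m) :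
    ℓ ∣ m / m.gcd k := by
  apply dvd_of_one_le_padicValNat
  rw [padicValNat.div_of_dvd (Nat.gcd_dvd_left m k), padicValNat_gcd_of_lt hk hv]
  omega

theorem not_dvd_div_gcd_of_padicValNat_lt (hk : k ≠ 0) (hv : padicValNat ℓ k < padicValNat ℓ m) :
    ¬ℓ ∣ k / m.gcd k := by
  intro hdvd
  have hquot : k / m.gcd k ≠ 0 :=
    (Nat.div_ne_zero_iff_of_dvd (Nat.gcd_dvd_right m k)).mpr ⟨hk, Nat.gcd_ne_zero_right hk⟩
  have := one_le_padicValNat_of_dvd hquot hdvd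
  rw [padicValNat.div_of_dvd (Nat.gcd_dvd_right m k), padicValNat_gcd_of_lt hk hv] at this
  omega

end PadicValNatGcd

section OddModEq

variable {q : ℕ}

theorem Odd.sq_modEq_one (hq : Odd q) : q ^ 2 ≡ 1 [MOD 2 * (q + 1)] := by
  obtain ⟨r, rfl⟩ := hq
  have : (2 * r + 1) ^ 2 = 1 + r * (2 * (2 * r + 1 + 1)) := by ring
  rw [Nat.ModEq, this, Nat.add_mul_mod_self_right]

theorem Odd.pow_modEq_one (hq : Odd q) {u : ℕ} (hu : Even u) : q ^ u ≡ 1 [MOD 2 * (q + 1)] := by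
  obtain ⟨s, rfl⟩ := hu
  rw [← two_mul, pow_mul]
  simpa using hq.sq_modEq_one.pow s

theorem Odd.pow_modEq_self (hq : Odd q) {t : ℕ} (ht : Odd t) : q ^ t ≡ q [MOD 2 * (q + 1)] := by
  obtain ⟨s, rfl⟩ := ht
  rw [pow_succ, pow_mul]
  simpa using (hq.sq_modEq_one.pow s).mul_right q

end OddModEq

theorem IsPrimitiveRoot.pow_eq_neg_one_of_modEq {R : Type*} [CommRing R] [NoZeroDivisors R]
    {ζ : R} {n j : ℕ} (hζ : IsPrimitiveRoot ζ (2 * n)) (hn : n ≠ 0) (hj : j ≡ n [MOD 2 * n]) :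
    ζ ^ j = -1 := by
  have hsq : IsPrimitiveRoot (ζ ^ n) 2 := by
    simpa [hn] using hζ.pow_of_dvd hn (dvd_mul_left n 2)
  have hfin := hζ.isOfFinOrder (mul_ne_zero two_ne_zero hn)
  rw [hfin.pow_eq_pow_iff_modEq.mpr (hζ.eq_orderOf ▸ hj), hsq.eq_neg_one_of_two_right]

theorem IsPrimitiveRoot.pow_div_of_dvd {M : Type*} [CommMonoid M] {ζ : M} {N a : ℕ}
    (hζ : IsPrimitiveRoot ζ N) (hN : N ≠ 0) (ha : a ∣ N) : IsPrimitiveRoot (ζ ^ (N / a)) a := by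
  have hquot : N / a ≠ 0 :=
    (Nat.div_ne_zero_iff_of_dvd ha).mpr ⟨hN, ne_zero_of_dvd_ne_zero hN ha⟩
  simpa only [Nat.div_div_self ha hN] using hζ.pow_of_dvd hquot (Nat.div_dvd_of_dvd ha)

theorem pi_pow_eq_neg_one_general (p m k : ℕ) [Fact p.Prime] (hodd : Odd p) (hk : 0 < k)
    (F : Type) [Field F]
    (π : F) (hπ : orderOf π = p ^ m - 1)
    (hv : padicValNat 2 k < padicValNat 2 m) :
    (2 * (p ^ Nat.gcd m k + 1) ∣ p ^ m - 1) ∧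
    (π ^ ((p ^ m - 1) / (2 * (p ^ Nat.gcd m k + 1)))) ^ (p ^ k + 1) = (-1 : F) := by
  have hm : m ≠ 0 := by rintro rfl; simp at hv
  set q := p ^ m.gcd k
  have hq : Odd q := hodd.pow
  have hpm : p ^ m = q ^ (m / m.gcd k) := by rw [← pow_mul, Nat.mul_div_cancel' (m.gcd_dvd_left k)]
  have hpk : p ^ k = q ^ (k / m.gcd k) := by rw [← pow_mul, Nat.mul_div_cancel' (m.gcd_dvd_right k)]
  have hdvd : 2 * (q + 1) ∣ p ^ m - 1 := by
    have heven : Even (m / m.gcd k) :=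
      even_iff_two_dvd.mpr (dvd_div_gcd_of_padicValNat_lt hk.ne' hv)
    rw [hpm]
    exact (Nat.modEq_iff_dvd' (Nat.one_le_pow _ _ hq.pos)).mp (hq.pow_modEq_one heven).symm
  refine ⟨hdvd, ?_⟩
  have hN : p ^ m - 1 ≠ 0 := Nat.sub_ne_zero_of_lt (Nat.one_lt_pow hm (Fact.out : p.Prime).one_lt)
  have hζ := (hπ ▸ IsPrimitiveRoot.orderOf π).pow_div_of_dvd hN hdvd
  have hodd_quot : Odd (k / m.gcd k) :=
    Nat.odd_iff.mpr (Nat.two_dvd_ne_zero.mp (not_dvd_div_gcd_of_padicValNat_lt hk.ne' hv))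
  refine hζ.pow_eq_neg_one_of_modEq (Nat.succ_ne_zero q) ?_
  rw [hpk]
  exact (hq.pow_modEq_self hodd_quot).add_right 1

theorem pi_pow_eq_neg_one (p m k : ℕ) [Fact p.Prime] (hodd : Odd p) (hm : 0 < m) (hk : 0 < k)
    (F : Type) [Field F] [Fintype F] [Algebra (ZMod p) F]
    (hcard : Fintype.card F = p ^ m)
    (π : F) (hπ : orderOf π = p ^ m - 1)
    (hv : padicValNat 2 k < padicValNat 2 m) :
    (2 * (p ^ Nat.gcd m k + 1) ∣ p ^ m - 1) ∧
    (π ^ ((p ^ m - 1) / (2 * (p ^ Nat.gcd m k + 1)))) ^ (p ^ k + 1) = (-1 : F) :=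
  pi_pow_eq_neg_one_general p m k hodd hk F π hπ hv
end

section
/- Assume v2(m) > v2(k). Then for every α ∈ F_{p^m}, Σ_{x∈F_{p^m}} ζ_p^{Tr(α x^{p^k+1})} = Σ_{x∈F_{p^m}} ζ_p^{Tr(−α x^{p^k+1})}. -/
/-!
If `v₂(k) < v₂(m)`, write `k = d * j` with `d = 2 ^ v₂(k)` and `j` odd, so that `2 * d ∣ m`.
Then `2 * (p ^ d + 1) ∣ p ^ m - 1`, so the cyclic group `Fˣ` contains some `c` with
`c ^ (p ^ d + 1) = -1`. For odd `e`, `c ^ (e + 1) = -1` forces `c ^ (e ^ 2) = c`, hence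
`c ^ (e ^ j + 1) = -1` for every odd `j`; with `e = p ^ d` this gives `c ^ (p ^ k + 1) = -1`.
The substitution `x ↦ c * x` then turns the sum for `α` into the sum for `-α`.
-/

theorem exists_eq_mul_odd_and_two_mul_dvd_of_padicValNat_lt {k m : ℕ} (hk : k ≠ 0)
    (hv : padicValNat 2 k < padicValNat 2 m) : ∃ d j, Odd j ∧ k = d * j ∧ 2 * d ∣ m := by
  obtain ⟨j, hj⟩ := pow_padicValNat_dvd (p := 2) (n := k)
  refine ⟨2 ^ padicValNat 2 k, j, ?_, hj, ?_⟩
  · rw [← Nat.not_even_iff_odd]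
    rintro ⟨i, rfl⟩
    exact pow_succ_padicValNat_not_dvd (p := 2) hk ⟨i, hj.trans (by ring)⟩
  · rw [← pow_succ']
    exact (pow_dvd_pow 2 hv).trans pow_padicValNat_dvd

theorem two_mul_add_one_dvd_pow_two_mul_sub_one {a : ℕ} (ha : Odd a) (s : ℕ) :
    2 * (a + 1) ∣ a ^ (2 * s) - 1 := by
  obtain ⟨r, rfl⟩ := ha
  have hsq : 2 * (2 * r + 1 + 1) ∣ (2 * r + 1) ^ 2 - 1 :=
    ⟨r, Nat.sub_eq_of_eq_add (by ring)⟩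
  simpa [pow_mul] using hsq.trans (Nat.sub_dvd_pow_sub_pow _ 1 s)

theorem FiniteField.exists_pow_eq_neg_one {F : Type*} [Field F] [Fintype F] {n : ℕ}
    (h : 2 * n ∣ Fintype.card F - 1) : ∃ c : Fˣ, (c : F) ^ n = -1 := by
  classical
  have hq : 0 < Fintype.card F - 1 := Nat.sub_pos_of_lt Fintype.one_lt_card
  obtain ⟨a, ha⟩ := h
  have hn : 0 < 2 * n := Nat.pos_of_ne_zero fun hn => by simp [hn] at ha; omega
  obtain ⟨g, hg⟩ := IsCyclic.exists_ofOrder_eq_natCard (α := Fˣ)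
  have hg : IsPrimitiveRoot (g : F) (Fintype.card F - 1) := by
    rw [IsPrimitiveRoot.coe_units_iff, ← Fintype.card_units, ← Nat.card_eq_fintype_card, ← hg]
    exact IsPrimitiveRoot.orderOf g
  have hω : IsPrimitiveRoot ((g : F) ^ a) (2 * n) := hg.pow hq (by rw [ha, mul_comm])
  refine ⟨g ^ a, ?_⟩
  rw [Units.val_pow_eq_pow_val]
  exact (hω.pow hn (mul_comm 2 n)).eq_neg_one_of_two_right

theorem pow_pow_add_one_eq_neg_one_of_odd {R : Type*} [CommMonoid R] [HasDistribNeg R] {c : R}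
    {e j : ℕ} (he : Odd e) (hj : Odd j) (h : c ^ (e + 1) = -1) : c ^ (e ^ j + 1) = -1 := by
  have hunit : IsUnit (c ^ e) := .of_mul_eq_one (-c) (by rw [mul_neg, ← pow_succ, h, neg_neg])
  have hsq : c ^ (e ^ 2) = c := hunit.mul_left_inj.mp <| by
    rw [← pow_add, ← pow_succ', h, sq, ← mul_add_one, pow_mul', h, he.neg_one_pow]
  have hfix : ∀ i : ℕ, c ^ ((e ^ 2) ^ i) = c := by
    intro i
    induction i with
    | zero => simp
    | succ i ih => rw [pow_succ, pow_mul, ih, hsq]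
  obtain ⟨i, rfl⟩ := hj
  rw [pow_succ e, pow_mul e, pow_add, pow_mul c, hfix, pow_one, ← pow_succ, h]

theorem sum_comp_neg_mul_pow {R M : Type*} [CommRing R] [Fintype R] [AddCommMonoid M] {n : ℕ}
    {c : Rˣ} (hc : (c : R) ^ n = -1) (f : R → M) (α : R) :
    ∑ x : R, f (-α * x ^ n) = ∑ x : R, f (α * x ^ n) := by
  rw [← Equiv.sum_comp (Units.mulLeft c)]
  congr! 2 with x
  rw [Units.mulLeft_apply, mul_pow, hc]
  ring

theorem sum_eq_sum_neg_general (p m k : ℕ) (hodd : Odd p) (hk : 0 < k)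
    (F : Type) [Field F] [Fintype F] [Algebra (ZMod p) F]
    (hcard : Fintype.card F = p ^ m)
    (ζ : ℂ)
    (hv : padicValNat 2 k < padicValNat 2 m) :
    ∀ α : F,
      ∑ x : F, ζ ^ ((Algebra.trace (ZMod p) F (α * x ^ (p ^ k + 1))).val)
        = ∑ x : F, ζ ^ ((Algebra.trace (ZMod p) F (-α * x ^ (p ^ k + 1))).val) := by
  intro α
  obtain ⟨d, j, hj, rfl, s, rfl⟩ := exists_eq_mul_odd_and_two_mul_dvd_of_padicValNat_lt hk.ne' hv
  obtain ⟨c, hc⟩ : ∃ c : Fˣ, (c : F) ^ (p ^ d + 1) = -1 := by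
    refine FiniteField.exists_pow_eq_neg_one ?_
    rw [hcard, show 2 * d * s = d * (2 * s) by ring, pow_mul]
    exact two_mul_add_one_dvd_pow_two_mul_sub_one hodd.pow s
  have hck := pow_pow_add_one_eq_neg_one_of_odd hodd.pow hj hc
  rw [← pow_mul] at hck
  exact (sum_comp_neg_mul_pow hck (fun y => ζ ^ (Algebra.trace (ZMod p) F y).val) α).symm

theorem sum_eq_sum_neg (p m k : ℕ) [Fact p.Prime] (hodd : Odd p) (hm : 0 < m) (hk : 0 < k)
    (F : Type) [Field F] [Fintype F] [Algebra (ZMod p) F]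
    (hcard : Fintype.card F = p ^ m)
    (ζ : ℂ) (hζ : IsPrimitiveRoot ζ p)
    (hv : padicValNat 2 k < padicValNat 2 m) :
    ∀ α : F,
      ∑ x : F, ζ ^ ((Algebra.trace (ZMod p) F (α * x ^ (p ^ k + 1))).val)
        = ∑ x : F, ζ ^ ((Algebra.trace (ZMod p) F (-α * x ^ (p ^ k + 1))).val) :=
  sum_eq_sum_neg_general p m k hodd hk F hcard ζ hv
end

section
/- Assume v2(m) > v2(k). Then for every α ∈ F_{p^m}, R_α = (p−1) · Σ_{x∈F_{p^m}} ζ_p^{Tr(α x^{p^k+1})}. -/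
/-!
For `u ∈ 𝔽_p^*` pick `c ∈ F` with `c ^ (p ^ k + 1) = u`; the substitution `x ↦ c x` then turns
the inner sum at `u` into the inner sum at `1`, so all `p - 1` inner sums agree.

Such a `c` exists because `v₂(k) < v₂(m)` lets us write `k = g r` with `r` odd and `2 g ∣ m`.
With `q = p ^ g`, the `(q² - 1)`-th roots of unity lie in `F` and form a cyclic group whose
`(q + 1)`-th powers are exactly the `(q - 1)`-th roots of unity, among them `𝔽_p^*`. On that
group `x ^ p ^ k = x ^ q ^ r = x ^ q`, since `q ^ r ≡ q [MOD q² - 1]`.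
-/

open Finset

lemma Nat.exists_eq_mul_odd_of_padicValNat_two_lt {k m : ℕ} (hk : k ≠ 0)
    (hv : padicValNat 2 k < padicValNat 2 m) : ∃ g r, Odd r ∧ k = g * r ∧ 2 * g ∣ m := by
  obtain ⟨e, r, hr, rfl⟩ := Nat.exists_eq_two_pow_mul_odd hk
  have hvk : padicValNat 2 (2 ^ e * r) = e := by
    rw [padicValNat.mul (by positivity) hr.pos.ne', padicValNat.prime_pow,
      padicValNat.eq_zero_of_not_dvd hr.not_two_dvd_nat, add_zero]
  refine ⟨2 ^ e, r, hr, rfl, ?_⟩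
  rw [← pow_succ']
  exact (pow_dvd_pow 2 (hvk ▸ hv)).trans pow_padicValNat_dvd

lemma Nat.pow_modEq_self_of_odd (q : ℕ) {r : ℕ} (hr : Odd r) : q ^ r ≡ q [MOD q ^ 2 - 1] := by
  obtain ⟨s, rfl⟩ := hr
  rcases Nat.eq_zero_or_pos q with rfl | hq
  · simp
  have hsq : q ^ 2 ≡ 1 [MOD q ^ 2 - 1] := Nat.modEq_sub (Nat.one_le_pow 2 q hq)
  calc q ^ (2 * s + 1) = (q ^ 2) ^ s * q := by rw [pow_succ, pow_mul]
    _ ≡ 1 ^ s * q [MOD q ^ 2 - 1] := (hsq.pow s).mul_right q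
    _ = q := by rw [one_pow, one_mul]

theorem FiniteField.exists_isPrimitiveRoot (F : Type*) [Field F] [Fintype F] {n : ℕ}
    (hn : n ∣ Fintype.card F - 1) : ∃ ω : F, IsPrimitiveRoot ω n := by
  classical
  obtain ⟨g, hg⟩ := isCyclic_iff_exists_orderOf_eq_natCard.mp (inferInstance : IsCyclic Fˣ)
  have hgen : IsPrimitiveRoot (g : F) (Fintype.card F - 1) := by
    rw [IsPrimitiveRoot.coe_units_iff, ← Fintype.card_units, ← Nat.card_eq_fintype_card, ← hg]
    exact .orderOf g
  have hcard : 0 < Fintype.card F - 1 := by have := Fintype.one_lt_card (α := F); omega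
  exact ⟨_, hgen.pow hcard (Nat.div_mul_cancel hn).symm⟩

theorem IsPrimitiveRoot.exists_pow_eq_of_pow_eq_one {R : Type*} [CommRing R] [IsDomain R]
    {ω : R} {a b : ℕ} (ha : 0 < a) (hb : 0 < b) (hω : IsPrimitiveRoot ω (a * b)) {y : R}
    (hy : y ^ b = 1) : ∃ x : R, x ^ (a * b) = 1 ∧ x ^ a = y := by
  have : NeZero b := ⟨hb.ne'⟩
  obtain ⟨i, -, hi⟩ := (hω.pow (by positivity) rfl).eq_pow_of_pow_eq_one hy
  refine ⟨ω ^ i, ?_, ?_⟩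
  · rw [← pow_mul, mul_comm, pow_mul, hω.pow_eq_one, one_pow]
  · rw [← pow_mul, mul_comm, pow_mul, hi]

theorem FiniteField.exists_pow_prime_pow_add_one_eq {p m k : ℕ} [Fact p.Prime] (hk : k ≠ 0)
    {F : Type*} [Field F] [Fintype F] (hcard : Fintype.card F = p ^ m)
    (hv : padicValNat 2 k < padicValNat 2 m) {u : F} (hu : u ^ (p - 1) = 1) :
    ∃ c : F, c ^ (p ^ k + 1) = u := by
  obtain ⟨g, r, hr, rfl, s, rfl⟩ := Nat.exists_eq_mul_odd_of_padicValNat_two_lt hk hv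
  set q := p ^ g
  have hq : 1 < q := Nat.one_lt_pow (left_ne_zero_of_mul hk) (Fact.out : p.Prime).one_lt
  have hq2 : (q + 1) * (q - 1) = q ^ 2 - 1 := by rw [← Nat.sq_sub_sq, one_pow]
  have hN : (q + 1) * (q - 1) ∣ Fintype.card F - 1 := by
    rw [hcard, hq2, show p ^ (2 * g * s) = (q ^ 2) ^ s by rw [← pow_mul, ← pow_mul]; ring_nf]
    simpa only [one_pow] using Nat.sub_dvd_pow_sub_pow (q ^ 2) 1 s
  have huq : u ^ (q - 1) = 1 := by
    obtain ⟨t, ht⟩ : p - 1 ∣ q - 1 := by simpa using Nat.sub_dvd_pow_sub_pow p 1 g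
    rw [ht, pow_mul, hu, one_pow]
  obtain ⟨ω, hω⟩ := FiniteField.exists_isPrimitiveRoot F hN
  obtain ⟨c, hcN, hc⟩ := hω.exists_pow_eq_of_pow_eq_one (by omega) (by omega) huq
  have hexp : p ^ (g * r) + 1 ≡ q + 1 [MOD (q + 1) * (q - 1)] := by
    rw [hq2, pow_mul]
    exact (Nat.pow_modEq_self_of_odd q hr).add_right 1
  exact ⟨c, (pow_eq_pow_of_modEq hexp hcN).trans hc⟩

theorem sum_map_mul_linearMap_mul_pow_of_pow_eq {K F M : Type*} [CommRing K] [Field F]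
    [Fintype F] [Algebra K F] [AddCommMonoid M] (L : F →ₗ[K] K) (f : K → M) (α : F) (n : ℕ)
    {u : K} {c : F}
    (hc0 : c ≠ 0) (hc : c ^ n = algebraMap K F u) :
    ∑ x : F, f (u * L (α * x ^ n)) = ∑ x : F, f (L (α * x ^ n)) := by
  have hsubst (x : F) : u * L (α * x ^ n) = L (α * (c * x) ^ n) := by
    rw [mul_pow, hc, mul_left_comm, ← Algebra.smul_def, map_smul, smul_eq_mul]
  simp_rw [hsubst]
  exact Fintype.sum_equiv (Equiv.mulLeft₀ c hc0) _ _ fun _ ↦ rfl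

theorem R_alpha_eq_general (p m k : ℕ) [Fact p.Prime] (hk : 0 < k)
    (F : Type) [Field F] [Fintype F] [Algebra (ZMod p) F]
    (hcard : Fintype.card F = p ^ m)
    (ζ : ℂ)
    (hv : padicValNat 2 k < padicValNat 2 m) :
    ∀ α : F,
      ∑ u : (ZMod p)ˣ, ∑ x : F,
          ζ ^ (((u : ZMod p) * Algebra.trace (ZMod p) F (α * x ^ (p ^ k + 1))).val)
        = ((p : ℂ) - 1) * ∑ x : F, ζ ^ ((Algebra.trace (ZMod p) F (α * x ^ (p ^ k + 1))).val) := by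
  intro α
  have hinner (u : (ZMod p)ˣ) :
      ∑ x : F, ζ ^ (((u : ZMod p) * Algebra.trace (ZMod p) F (α * x ^ (p ^ k + 1))).val)
        = ∑ x : F, ζ ^ ((Algebra.trace (ZMod p) F (α * x ^ (p ^ k + 1))).val) := by
    have hu : algebraMap (ZMod p) F u ^ (p - 1) = 1 := by
      rw [← map_pow, ← Units.val_pow_eq_pow_val, ZMod.units_pow_card_sub_one_eq_one, Units.val_one,
        map_one]
    obtain ⟨c, hc⟩ := FiniteField.exists_pow_prime_pow_add_one_eq hk.ne' hcard hv hu
    have hc0 : c ≠ 0 := ne_zero_pow (Nat.succ_ne_zero _) (hc ▸ (map_ne_zero _).mpr u.ne_zero)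
    exact sum_map_mul_linearMap_mul_pow_of_pow_eq _ (fun t ↦ ζ ^ t.val) α _ hc0 hc
  rw [sum_congr rfl fun u _ ↦ hinner u, sum_const, card_univ, ZMod.card_units, nsmul_eq_mul,
    Nat.cast_sub (Fact.out : p.Prime).one_le, Nat.cast_one]

theorem R_alpha_eq (p m k : ℕ) [Fact p.Prime] (hodd : Odd p) (hm : 0 < m) (hk : 0 < k)
    (F : Type) [Field F] [Fintype F] [Algebra (ZMod p) F]
    (hcard : Fintype.card F = p ^ m)
    (ζ : ℂ) (hζ : IsPrimitiveRoot ζ p)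
    (hv : padicValNat 2 k < padicValNat 2 m) :
    ∀ α : F,
      ∑ u : (ZMod p)ˣ, ∑ x : F,
          ζ ^ (((u : ZMod p) * Algebra.trace (ZMod p) F (α * x ^ (p ^ k + 1))).val)
        = ((p : ℂ) - 1) * ∑ x : F, ζ ^ ((Algebra.trace (ZMod p) F (α * x ^ (p ^ k + 1))).val) :=
  R_alpha_eq_general p m k hk F hcard ζ hv
end

section
/- Set t = (p^k+1)/2 and suppose π^{t·p^i} ≠ −π^t for all i ∈ {0,1,…,m−1}. Then the map (a,b) ↦ c_t(a,b) from F_{p^m} × F_{p^m} to F_p^{p^m−1} is injective; in particular the cyclic code C_t contains exactly p^{2m} codewords, i.e., it has dimension 2m over F_p. -/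
/-!
Write `α = π ^ t`. Since `α ^ (p ^ m - 1) = (-α) ^ (p ^ m - 1) = 1` (the exponent is even),
the codeword `c_t(a, b)` vanishes iff `Tr ((a + (-1) ^ j * b) * α ^ j) = 0` for every `j`.
Splitting into even and odd `j` gives `Tr ((a + b) * β ^ j) = 0` and
`Tr ((a - b) * α * β ^ j) = 0` with `β = α ^ 2`,
so by nondegeneracy of the trace form `a = b = 0` as soon as `β` generates `F` over `𝔽_p`.
Otherwise `β` lies in a subfield `𝔽_{p^d}` with `d ∣ m`, `d < m`, hence `α ^ (p ^ d) = ± α`.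
The sign `-` is excluded by hypothesis; the sign `+` means `p ^ m - 1 ∣ t * (p ^ d - 1)`.
Then `S = (p ^ m - 1) / (p ^ d - 1) > p ^ (m - d)` divides `p ^ m - 1`, and `2 * S ∣ p ^ k + 1`,
so `S` also divides `p ^ (k % m) + 1` and `p ^ (m - k % m) + 1`. This forces `m = 2 * d` and
`k % (2 * d) = d`, and then `2 * S = 2 * (p ^ d + 1)`, a divisor of `p ^ (2 * d) - 1`, cannot
divide `p ^ k + 1`.
-/

theorem natCast_pow_eq_one_of_dvd {n a m : ℕ} (ha : 0 < a) (h : n ∣ a ^ m - 1) :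
    (a : ZMod n) ^ m = 1 := by
  have := (ZMod.natCast_eq_natCast_iff _ _ _).2
    ((Nat.modEq_iff_dvd' (Nat.one_le_pow _ _ ha)).2 h)
  exact_mod_cast this.symm

theorem natCast_pow_eq_neg_one_iff {n a k : ℕ} :
    (a : ZMod n) ^ k = -1 ↔ n ∣ a ^ k + 1 := by
  rw [← ZMod.natCast_eq_zero_iff, eq_neg_iff_add_eq_zero]
  push_cast
  rfl

theorem dvd_pow_mod_add_one {n a m k : ℕ} (ha : 0 < a) (hm : n ∣ a ^ m - 1)
    (hk : n ∣ a ^ k + 1) : n ∣ a ^ (k % m) + 1 := by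
  rw [← natCast_pow_eq_neg_one_iff, ← pow_eq_pow_mod k (natCast_pow_eq_one_of_dvd ha hm)]
  exact natCast_pow_eq_neg_one_iff.2 hk

theorem dvd_pow_sub_mod_add_one {n a m k : ℕ} (ha : 0 < a) (hm0 : 0 < m) (hm : n ∣ a ^ m - 1)
    (hk : n ∣ a ^ k + 1) : n ∣ a ^ (m - k % m) + 1 := by
  have h1 := natCast_pow_eq_one_of_dvd ha hm
  have h2 := natCast_pow_eq_neg_one_iff.2 (dvd_pow_mod_add_one ha hm hk)
  have := pow_sub_mul_pow (a : ZMod n) (Nat.mod_lt k hm0).le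
  rw [h1, h2] at this
  exact natCast_pow_eq_neg_one_iff.1 (by linear_combination -this)

theorem not_two_mul_pow_add_one_dvd {p d k : ℕ} (hp : Odd p) (hk : k % (2 * d) = d) :
    ¬ 2 * (p ^ d + 1) ∣ p ^ k + 1 := by
  intro h
  have hp0 : 0 < p := hp.pos
  have hfac : p ^ (2 * d) - 1 = (p ^ d - 1) * (p ^ d + 1) := by
    zify [Nat.one_le_pow d p hp0, Nat.one_le_pow (2 * d) p hp0]
    ring
  have hdvd : 2 * (p ^ d + 1) ∣ p ^ (2 * d) - 1 := by
    rw [hfac]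
    exact mul_dvd_mul_right (Nat.Odd.sub_odd hp.pow odd_one).two_dvd _
  have := Nat.le_of_dvd (by positivity) (hk ▸ dvd_pow_mod_add_one hp0 hdvd h)
  omega

theorem not_two_mul_pow_sub_one_dvd {p m k d : ℕ} (hp : Odd p) (hp1 : 1 < p) (hd : 0 < d)
    (hdm : d ∣ m) (hlt : d < m) : ¬ 2 * (p ^ m - 1) ∣ (p ^ k + 1) * (p ^ d - 1) := by
  intro h
  have h2d : 2 * d ≤ m := by
    obtain ⟨s, rfl⟩ := hdm
    have : 2 ≤ s := by
      by_contra hs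
      interval_cases s <;> omega
    nlinarith
  have hq : 1 < p ^ d := Nat.one_lt_pow hd.ne' hp1
  set S := (p ^ m - 1) / (p ^ d - 1)
  have hS : S * (p ^ d - 1) = p ^ m - 1 :=
    Nat.div_mul_cancel (Nat.pow_sub_one_dvd_pow_sub_one p hdm)
  have h2S : 2 * S ∣ p ^ k + 1 := by
    rw [← hS, ← mul_assoc] at h
    exact Nat.dvd_of_mul_dvd_mul_right (by omega) h
  have hSlow : p ^ (m - d) + 1 ≤ S := by
    refine Nat.le_of_mul_le_mul_right ?_ (show 0 < p ^ d - 1 by omega)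
    have hmd : p ^ (m - d) * p ^ d = p ^ m := pow_sub_mul_pow p hlt.le
    have hdmd : p ^ d ≤ p ^ (m - d) := Nat.pow_le_pow_right (by omega) (by omega)
    rw [hS]
    zify [hq.le, Nat.one_le_pow m p (by omega)] at hmd hdmd ⊢
    nlinarith
  have hle {e : ℕ} (he : S ∣ p ^ e + 1) : m - d ≤ e :=
    (Nat.pow_le_pow_iff_right hp1).1 <| by
      have := Nat.le_of_dvd (by positivity) he
      omega
  have hSk := dvd_of_mul_left_dvd h2S
  have hmod := hle (dvd_pow_mod_add_one (by omega) ⟨_, hS.symm⟩ hSk)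
  have hcomod := hle (dvd_pow_sub_mod_add_one (by omega) (by omega) ⟨_, hS.symm⟩ hSk)
  obtain ⟨rfl, hkd⟩ : m = 2 * d ∧ k % m = d := by omega
  have hSd : S = p ^ d + 1 := by
    refine Nat.eq_of_mul_eq_mul_right (show 0 < p ^ d - 1 by omega) (hS.trans ?_)
    zify [hq.le, Nat.one_le_pow (2 * d) p (by omega)]
    ring
  exact not_two_mul_pow_add_one_dvd hp hkd (hSd ▸ h2S)

open Module IntermediateField

section FieldTheory

variable {K L : Type*} [Field K] [Field L] [Algebra K L] [FiniteDimensional K L]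

theorem span_range_pow_eq_top_of_adjoin_eq_top {β : L} (hβ : K⟮β⟯ = ⊤) :
    Submodule.span K (Set.range (β ^ · : ℕ → L)) = ⊤ := by
  have h := congrArg IntermediateField.toSubalgebra hβ
  rw [adjoin_toSubalgebra_of_isAlgebraic fun x _ ↦ Algebra.IsAlgebraic.isAlgebraic x,
    top_toSubalgebra] at h
  rw [← Submonoid.coe_powers, Submonoid.powers_eq_closure, ← Algebra.adjoin_eq_span, h,
    Algebra.top_toSubmodule]

theorem eq_zero_of_trace_mul_pow_eq_zero [Algebra.IsSeparable K L] {β c : L} (hβ : K⟮β⟯ = ⊤)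
    (h : ∀ j : ℕ, Algebra.trace K L (c * β ^ j) = 0) : c = 0 := by
  have : Algebra.traceForm K L c = 0 :=
    LinearMap.ext_on_range (span_range_pow_eq_top_of_adjoin_eq_top hβ) h
  exact (traceForm_nondegenerate K L).1 c fun x ↦ LinearMap.congr_fun this x

theorem exists_pow_card_pow_eq_self_of_adjoin_ne_top [Fintype K] {β : L} (hβ : K⟮β⟯ ≠ ⊤) :
    ∃ d, 0 < d ∧ d ∣ finrank K L ∧ d < finrank K L ∧ β ^ Fintype.card K ^ d = β := by
  have := Module.finite_of_finite K (M := K⟮β⟯)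
  let : Fintype K⟮β⟯ := Fintype.ofFinite _
  have htower := Module.finrank_mul_finrank K K⟮β⟯ L
  have hne : finrank K⟮β⟯ L ≠ 1 := fun h ↦ hβ (finrank_eq_one_iff_eq_top.1 h)
  have hpos : 0 < finrank K⟮β⟯ L := Module.finrank_pos
  refine ⟨finrank K K⟮β⟯, Module.finrank_pos, Dvd.intro _ htower, ?_, ?_⟩
  · rw [← htower]
    exact lt_mul_right Module.finrank_pos (by omega)
  · have h := FiniteField.pow_card (AdjoinSimple.gen K β)
    rw [Module.card_eq_pow_finrank (K := K)] at h
    exact congrArg Subtype.val h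

theorem eq_zero_of_trace_mul_pow_add_mul_neg_pow_eq_zero [Algebra.IsSeparable K L]
    (h2 : (2 : K) ≠ 0) {α c e : L} (hα : α ≠ 0) (hgen : K⟮α ^ 2⟯ = ⊤)
    (h : ∀ j : ℕ, Algebra.trace K L (c * α ^ j + e * (-α) ^ j) = 0) : c = 0 ∧ e = 0 := by
  have hadd : c + e = 0 := eq_zero_of_trace_mul_pow_eq_zero hgen fun j ↦ by
    convert h (2 * j) using 2
    rw [(even_two_mul j).neg_pow]
    ring
  have hsub : (c - e) * α = 0 := eq_zero_of_trace_mul_pow_eq_zero hgen fun j ↦ by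
    convert h (2 * j + 1) using 2
    rw [(odd_two_mul_add_one j).neg_pow]
    ring
  have h2L : (2 : L) ≠ 0 := by
    simpa only [map_ofNat, map_zero] using (algebraMap K L).injective.ne h2
  have hc : 2 * c = 0 := by
    linear_combination hadd + (mul_eq_zero.1 hsub).resolve_right hα
  have hc : c = 0 := (mul_eq_zero.1 hc).resolve_left h2L
  exact ⟨hc, by linear_combination hadd - hc⟩

end FieldTheory

noncomputable def codeword (K : Type*) {L : Type*} [Field K] [Field L] [Algebra K L] (π : L)
    (t N : ℕ) (ab : L × L) : Fin N → K :=
  fun i ↦ Algebra.trace K L (ab.1 * π ^ (t * (i : ℕ)) + ab.2 * (-(π ^ t)) ^ (i : ℕ))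

section FiniteField

variable {p m k : ℕ} [Fact p.Prime] {F : Type*} [Field F] [Fintype F] [Algebra (ZMod p) F]
  {π : F}

theorem adjoin_sq_pow_eq_top (hodd : Odd p) (hcard : Fintype.card F = p ^ m)
    (hπ : orderOf π = p ^ m - 1)
    (hne : ∀ i < m, π ^ ((p ^ k + 1) / 2 * p ^ i) ≠ -π ^ ((p ^ k + 1) / 2)) :
    (ZMod p)⟮(π ^ ((p ^ k + 1) / 2)) ^ 2⟯ = ⊤ := by
  set t := (p ^ k + 1) / 2
  have hp1 : 1 < p := (Fact.out : p.Prime).one_lt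
  have hm : finrank (ZMod p) F = m := by
    rw [Module.card_eq_pow_finrank (K := ZMod p), ZMod.card] at hcard
    exact Nat.pow_right_injective hp1 hcard
  by_contra hβ
  obtain ⟨d, hd, hdm, hdlt, hfrob⟩ := exists_pow_card_pow_eq_self_of_adjoin_ne_top hβ
  rw [hm] at hdm hdlt
  rw [ZMod.card, ← pow_mul, mul_comm, pow_mul] at hfrob
  rcases sq_eq_sq_iff_eq_or_eq_neg.1 hfrob with hfix | hneg
  · have hN : 1 < p ^ m := Nat.one_lt_pow (by omega) hp1
    have hπ0 : π ≠ 0 := ne_zero_pow (n := p ^ m - 1) (by omega) <| by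
      rw [← hπ, pow_orderOf_eq_one]
      exact one_ne_zero
    have hord : orderOf π ∣ t * (p ^ d - 1) := by
      refine orderOf_dvd_of_pow_eq_one (mul_right_cancel₀ (pow_ne_zero t hπ0) ?_)
      rw [pow_mul, ← pow_succ, Nat.sub_add_cancel (Nat.one_le_pow _ _ (by omega)), hfix,
        one_mul]
    refine not_two_mul_pow_sub_one_dvd hodd hp1 hd hdm hdlt (k := k) ?_
    rw [← Nat.two_mul_div_two_of_even hodd.pow.add_one, mul_assoc, ← hπ]
    exact mul_dvd_mul_left 2 hord
  · exact hne d hdlt (by rw [pow_mul, hneg])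

theorem injective_codeword (hodd : Odd p) (hcard : Fintype.card F = p ^ m)
    (hπ : orderOf π = p ^ m - 1)
    (hne : ∀ i < m, π ^ ((p ^ k + 1) / 2 * p ^ i) ≠ -π ^ ((p ^ k + 1) / 2)) :
    Function.Injective (codeword (ZMod p) π ((p ^ k + 1) / 2) (p ^ m - 1)) := by
  set α := π ^ ((p ^ k + 1) / 2)
  have hN : 0 < p ^ m - 1 := by
    have := hcard ▸ Fintype.one_lt_card (α := F)
    omega
  have hαN : α ^ (p ^ m - 1) = 1 := by
    rw [← pow_mul, mul_comm, pow_mul, ← hπ, pow_orderOf_eq_one, one_pow]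
  have hnegαN : (-α) ^ (p ^ m - 1) = 1 := by
    rw [(Nat.Odd.sub_odd hodd.pow odd_one).neg_pow, hαN]
  have h2 : (2 : ZMod p) ≠ 0 := Ring.two_ne_zero <| by
    rw [ZMod.ringChar_zmod_n]
    rintro rfl
    exact Nat.not_even_iff_odd.2 hodd even_two
  intro x y hxy
  obtain ⟨hx1, hx2⟩ := eq_zero_of_trace_mul_pow_add_mul_neg_pow_eq_zero h2
    (ne_zero_pow hN.ne' (hαN ▸ one_ne_zero)) (adjoin_sq_pow_eq_top hodd hcard hπ hne)
    (c := x.1 - y.1) (e := x.2 - y.2) fun j ↦ by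
      have := congrFun hxy ⟨j % (p ^ m - 1), Nat.mod_lt j hN⟩
      simp only [codeword, pow_mul] at this
      rw [← pow_eq_pow_mod j hαN, ← pow_eq_pow_mod j hnegαN] at this
      rw [sub_mul, sub_mul, ← add_sub_add_comm, map_sub, this, sub_self]
  exact Prod.ext (sub_eq_zero.1 hx1) (sub_eq_zero.1 hx2)

end FiniteField

theorem codeword_map_injective_general (p m k : ℕ) [Fact p.Prime] (hodd : Odd p)
    (F : Type) [Field F] [Fintype F] [Algebra (ZMod p) F]
    (hcard : Fintype.card F = p ^ m)
    (π : F) (hπ : orderOf π = p ^ m - 1)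
    (t : ℕ) (ht : t = (p ^ k + 1) / 2)
    (hne : ∀ i < m, π ^ (t * p ^ i) ≠ -(π ^ t)) :
    Function.Injective (fun ab : F × F => fun i : Fin (p ^ m - 1) =>
      Algebra.trace (ZMod p) F
        (ab.1 * π ^ (t * (i : ℕ)) + ab.2 * (-(π ^ t)) ^ (i : ℕ))) ∧
    (Finset.univ.image (fun ab : F × F => fun i : Fin (p ^ m - 1) =>
      Algebra.trace (ZMod p) F
        (ab.1 * π ^ (t * (i : ℕ)) + ab.2 * (-(π ^ t)) ^ (i : ℕ)))).card = p ^ (2 * m) := by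
  subst ht
  have hinj := injective_codeword hodd hcard hπ hne
  refine ⟨hinj, (Finset.card_image_of_injective _ hinj).trans ?_⟩
  rw [Finset.card_univ, Fintype.card_prod, hcard, ← pow_add, two_mul]

theorem codeword_map_injective (p m k : ℕ) [Fact p.Prime] (hodd : Odd p)
    (hm : 0 < m) (hk : 0 < k)
    (F : Type) [Field F] [Fintype F] [DecidableEq F] [Algebra (ZMod p) F]
    (hcard : Fintype.card F = p ^ m)
    (π : F) (hπ : orderOf π = p ^ m - 1)
    (t : ℕ) (ht : t = (p ^ k + 1) / 2)
    (hne : ∀ i < m, π ^ (t * p ^ i) ≠ -(π ^ t)) :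
    Function.Injective (fun ab : F × F => fun i : Fin (p ^ m - 1) =>
      Algebra.trace (ZMod p) F
        (ab.1 * π ^ (t * (i : ℕ)) + ab.2 * (-(π ^ t)) ^ (i : ℕ))) ∧
    (Finset.univ.image (fun ab : F × F => fun i : Fin (p ^ m - 1) =>
      Algebra.trace (ZMod p) F
        (ab.1 * π ^ (t * (i : ℕ)) + ab.2 * (-(π ^ t)) ^ (i : ℕ)))).card = p ^ (2 * m) :=
  codeword_map_injective_general p m k hodd F hcard π hπ t ht hne
end
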